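/- arXiv:2405.09157 — 3 statements merged into one kernel-verified Lean document; each statement's English description precedes it below -/
import Mathlib

section
/- Let r ≥ 1, T ≥ 1, η ∈ (0,1], and let m^1, …, m^T ∈ ℝ^r be loss vectors with ‖m^t‖_∞ ≤ 1 for all t. Define p^t ∈ ℝ^r by p^t_i = exp(−η Σ_{τ=1}^{t−1} m^τ_i) / Σ_{k=1}^r exp(−η Σ_{τ=1}^{t−1} m^τ_k) (so p^1 is the uniform vector (1/r, …, 1/r)). Then Σ_{t=1}^T ⟨m^t, p^t⟩ ≤ min_{i ∈ [r]} Σ_{t=1}^T m^t_i + ηT + (ln r)/η. -/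
lemma exp_le_one_add_sq {x : ℝ} (hx : |x| ≤ 1) : Real.exp x ≤ 1 + x + x ^ 2 := by
  have h := Real.exp_bound hx (n := 3) (by norm_num)
  have h1 := (abs_sub_le_iff.1 h).1
  have hsum : ∑ m ∈ Finset.range 3, x ^ m / m.factorial = 1 + x + x ^ 2 / 2 := by
    simp [Finset.sum_range_succ]
  rw [hsum] at h1
  have hc : ((Nat.succ 3 : ℕ) : ℝ) / ((Nat.factorial 3 : ℕ) * (3:ℕ)) = 2/9 := by
    norm_num [Nat.factorial]
  rw [hc] at h1
  have h2 : |x| ^ 3 ≤ x ^ 2 := by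
    calc |x| ^ 3 ≤ |x| ^ 2 := pow_le_pow_of_le_one (abs_nonneg x) hx (by norm_num)
    _ = x ^ 2 := sq_abs x
  nlinarith [h1, h2]

/-- SCMWU regret bound on the nonnegative orthant (classical MWU regret bound). -/
theorem scmwu_regret_orthant
    (r T : ℕ) (hr : 1 ≤ r) (hT : 1 ≤ T) (η : ℝ) (hη0 : 0 < η) (hη1 : η ≤ 1)
    (m : ℕ → Fin r → ℝ)
    (hm : ∀ t ∈ Finset.range T, ∀ i, |m t i| ≤ 1)
    (p : ℕ → Fin r → ℝ)
    (hp : ∀ t i, p t i =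
      Real.exp (-η * ∑ τ ∈ Finset.range t, m τ i) /
        ∑ k, Real.exp (-η * ∑ τ ∈ Finset.range t, m τ k)) :
    ∑ t ∈ Finset.range T, ∑ i, m t i * p t i ≤
      (Finset.univ.inf' ⟨⟨0, hr⟩, Finset.mem_univ _⟩
          fun i => ∑ t ∈ Finset.range T, m t i)
        + η * T + Real.log r / η := by
  set i0 : Fin r := ⟨0, hr⟩
  set Z : ℕ → ℝ := fun t => ∑ k, Real.exp (-η * ∑ τ ∈ Finset.range t, m τ k) with hZ
  have hZpos : ∀ t, 0 < Z t := fun t =>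
    Finset.sum_pos (fun k _ => Real.exp_pos _) ⟨i0, Finset.mem_univ _⟩
  -- one step
  have step : ∀ t, t < T → Z (t+1) ≤ Z t * Real.exp (η^2 - η * ∑ i, m t i * p t i) := by
    intro t ht
    have h1 : Z (t+1) ≤ Z t * (1 - η * ∑ i, m t i * p t i + η^2) := by
      have heq : Z (t+1) = ∑ k, Real.exp (-η * ∑ τ ∈ Finset.range t, m τ k)
          * Real.exp (-η * m t k) := by
        simp only [hZ]
        refine Finset.sum_congr rfl fun k _ => ?_
        rw [← Real.exp_add, Finset.sum_range_succ]
        ring_nf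
      rw [heq]
      have h2 : ∀ k : Fin r, Real.exp (-η * ∑ τ ∈ Finset.range t, m τ k)
          * Real.exp (-η * m t k) ≤ Real.exp (-η * ∑ τ ∈ Finset.range t, m τ k)
          * (1 - η * m t k + η^2) := by
        intro k
        apply mul_le_mul_of_nonneg_left _ (Real.exp_pos _).le
        have hmk := hm t (Finset.mem_range.2 ht) k
        have hb : |(-η * m t k)| ≤ 1 := by
          rw [abs_mul, abs_neg, abs_of_pos hη0]
          calc η * |m t k| ≤ 1 * 1 := by
                apply mul_le_mul hη1 hmk (abs_nonneg _) (by norm_num)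
          _ = 1 := by norm_num
        calc Real.exp (-η * m t k) ≤ 1 + (-η * m t k) + (-η * m t k)^2 :=
              exp_le_one_add_sq hb
        _ ≤ 1 - η * m t k + η^2 := by
            have : (-η * m t k)^2 ≤ η^2 := by
              have : (m t k)^2 ≤ 1 := by
                rw [← sq_abs]
                exact pow_le_one₀ (abs_nonneg _) (hm t (Finset.mem_range.2 ht) k)
              nlinarith [sq_nonneg η]
            nlinarith
      calc (∑ k, Real.exp (-η * ∑ τ ∈ Finset.range t, m τ k) * Real.exp (-η * m t k))
          ≤ ∑ k, Real.exp (-η * ∑ τ ∈ Finset.range t, m τ k) * (1 - η * m t k + η^2) :=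
            Finset.sum_le_sum fun k _ => h2 k
      _ = Z t * (1 - η * ∑ i, m t i * p t i + η^2) := by
          have hsum_eq : (∑ k, Real.exp (-η * ∑ τ ∈ Finset.range t, m τ k)) = Z t := rfl
          have hZp : ∀ k, Z t * p t k = Real.exp (-η * ∑ τ ∈ Finset.range t, m τ k) := by
            intro k
            rw [hp t k, hsum_eq, mul_div_cancel₀ _ (ne_of_gt (hZpos t))]
          have e1 : ∀ k : Fin r, m t k * p t k * Z t
              = Real.exp (-η * ∑ τ ∈ Finset.range t, m τ k) * m t k := by
            intro k
            calc m t k * p t k * Z t = m t k * (Z t * p t k) := by ring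
            _ = _ := by rw [hZp k]; ring
          have e2 : ∑ k, m t k * p t k * Z t
              = ∑ k, Real.exp (-η * ∑ τ ∈ Finset.range t, m τ k) * m t k :=
            Finset.sum_congr rfl fun k _ => e1 k
          have e3 : Z t * (1 - η * ∑ i, m t i * p t i + η ^ 2)
              = Z t + η ^ 2 * Z t - η * ∑ k, m t k * p t k * Z t := by
            rw [← Finset.sum_mul]; ring
          rw [e3, e2]
          simp only [hZ, Finset.mul_sum]
          rw [← Finset.sum_add_distrib, ← Finset.sum_sub_distrib]
          exact Finset.sum_congr rfl fun k _ => by ring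
    calc Z (t+1) ≤ Z t * (1 - η * ∑ i, m t i * p t i + η^2) := h1
    _ ≤ Z t * Real.exp (η^2 - η * ∑ i, m t i * p t i) := by
        apply mul_le_mul_of_nonneg_left _ (hZpos t).le
        have := Real.add_one_le_exp (η^2 - η * ∑ i, m t i * p t i)
        linarith
  -- iterate
  have main : ∀ n, n ≤ T → Z n ≤ Z 0 *
      Real.exp (∑ t ∈ Finset.range n, (η^2 - η * ∑ i, m t i * p t i)) := by
    intro n
    induction n with
    | zero => intro _; simp
    | succ n ih =>
      intro hn
      have hn' : n ≤ T := Nat.le_of_succ_le hn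
      calc Z (n+1) ≤ Z n * Real.exp (η^2 - η * ∑ i, m n i * p n i) := step n hn
      _ ≤ (Z 0 * Real.exp (∑ t ∈ Finset.range n, (η^2 - η * ∑ i, m t i * p t i)))
            * Real.exp (η^2 - η * ∑ i, m n i * p n i) := by
          apply mul_le_mul_of_nonneg_right (ih hn') (Real.exp_pos _).le
      _ = Z 0 * Real.exp (∑ t ∈ Finset.range (n+1), (η^2 - η * ∑ i, m t i * p t i)) := by
          rw [Finset.sum_range_succ, Real.exp_add]; ring
  have hZ0 : Z 0 = r := by simp [hZ]
  -- lower bound on Z T via the minimizer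
  obtain ⟨j, _, hj⟩ := Finset.exists_mem_eq_inf' (⟨i0, Finset.mem_univ _⟩ :
    (Finset.univ : Finset (Fin r)).Nonempty) (fun i => ∑ t ∈ Finset.range T, m t i)
  have hlow : Real.exp (-η * ∑ τ ∈ Finset.range T, m τ j) ≤ Z T :=
    Finset.single_le_sum (f := fun k => Real.exp (-η * ∑ τ ∈ Finset.range T, m τ k))
      (fun k _ => (Real.exp_pos _).le) (Finset.mem_univ j)
  have hfinal : Real.exp (-η * ∑ τ ∈ Finset.range T, m τ j) ≤
      (r : ℝ) * Real.exp (∑ t ∈ Finset.range T, (η^2 - η * ∑ i, m t i * p t i)) := by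
    calc Real.exp (-η * ∑ τ ∈ Finset.range T, m τ j) ≤ Z T := hlow
    _ ≤ Z 0 * Real.exp (∑ t ∈ Finset.range T, (η^2 - η * ∑ i, m t i * p t i)) :=
        main T le_rfl
    _ = _ := by rw [hZ0]
  -- take logs
  have hrpos : (0:ℝ) < r := by exact_mod_cast hr
  have hlog := Real.log_le_log (Real.exp_pos _) hfinal
  rw [Real.log_exp, Real.log_mul (ne_of_gt hrpos) (ne_of_gt (Real.exp_pos _)),
    Real.log_exp] at hlog
  rw [Finset.sum_sub_distrib] at hlog
  simp only [Finset.sum_const, Finset.card_range, nsmul_eq_mul, ← Finset.mul_sum] at hlog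
  rw [hj]
  rw [← sub_le_iff_le_add', le_div_iff₀ hη0]
  nlinarith [hlog, Real.log_nonneg (by exact_mod_cast hr : (1:ℝ) ≤ r)]
end

section
/- Let d ≥ 1, T ≥ 1, η ∈ (0,1], and let m^1, …, m^T ∈ ℝ^d × ℝ be loss vectors, m^t = (u^t, u^t_0), satisfying (|u^t_0| + ‖u^t‖)/√2 ≤ 1 for all t. For each t let x^t = −η Σ_{τ=1}^{t−1} m^τ and define p^t = exp_J(x^t) / Tr(exp_J(x^t)), where exp_J and Tr are the second-order-cone Jordan exponential and trace defined in the context (so p^1 = (0, 1/√2)). Writing (S, S_0) = Σ_{t=1}^T m^t, one has Σ_{t=1}^T ⟨m^t, p^t⟩ ≤ (S_0 − ‖S‖)/√2 + ηT + (ln 2)/η, where ⟨·,·⟩ is the standard Euclidean inner product on ℝ^d × ℝ and ‖·‖ is the Euclidean norm on ℝ^d. -/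
open scoped Classical

/-- The trace in the Euclidean Jordan algebra underlying the second-order cone. -/
noncomputable def socTrace {d : ℕ} (x : EuclideanSpace ℝ (Fin d) × ℝ) : ℝ :=
  Real.sqrt 2 * x.2

/-- The Jordan exponential in the Euclidean Jordan algebra underlying the
second-order cone, computed via the spectral decomposition. -/
noncomputable def socExp {d : ℕ} (x : EuclideanSpace ℝ (Fin d) × ℝ) :
    EuclideanSpace ℝ (Fin d) × ℝ :=
  if x.1 = 0 then (0, Real.sqrt 2 * Real.exp (x.2 / Real.sqrt 2))
  else
    (((Real.exp ((x.2 + ‖x.1‖) / Real.sqrt 2)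
        - Real.exp ((x.2 - ‖x.1‖) / Real.sqrt 2)) / Real.sqrt 2) • (‖x.1‖⁻¹ • x.1),
      (Real.exp ((x.2 + ‖x.1‖) / Real.sqrt 2)
        + Real.exp ((x.2 - ‖x.1‖) / Real.sqrt 2)) / Real.sqrt 2)


lemma two_mul_inj : Function.Injective (fun n : ℕ => 2*n) :=
  fun a b h => by dsimp at h; omega

lemma summable_cosh_series (x : ℝ) :
    Summable (fun n : ℕ => x ^ (2*n) / (2*n).factorial) :=
  (Real.summable_pow_div_factorial x).comp_injective two_mul_inj

lemma cosh_eq_tsum (x : ℝ) :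
    Real.cosh x = ∑' n : ℕ, x ^ (2*n) / (2*n).factorial := by
  have hexp : ∀ y : ℝ, Real.exp y = ∑' n : ℕ, y ^ n / n.factorial := by
    intro y
    rw [Real.exp_eq_exp_ℝ, NormedSpace.exp_eq_tsum_div]
  have hs1 := Real.summable_pow_div_factorial x
  have hs2 := Real.summable_pow_div_factorial (-x)
  have key : Real.cosh x = ∑' n : ℕ, (x ^ n + (-x) ^ n) / (2 * n.factorial) := by
    rw [Real.cosh_eq, hexp, hexp, ← Summable.tsum_add hs1 hs2, ← tsum_div_const]
    congr 1; ext n; ring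
  rw [key]
  rw [← Function.Injective.tsum_eq (g := fun n : ℕ => 2*n) two_mul_inj
    (f := fun n : ℕ => (x ^ n + (-x) ^ n) / (2 * n.factorial))]
  · congr 1; ext n
    rw [show (-x) ^ (2*n) = x ^ (2*n) by rw [neg_pow]; simp [pow_mul]]
    ring
  · intro n hn
    simp only [Function.mem_support] at hn
    rcases Nat.even_or_odd n with ⟨k, hk⟩ | ho
    · exact ⟨k, by dsimp; omega⟩
    · exfalso; apply hn
      rw [ho.neg_pow]; ring

lemma cosh_sqrt_eq (s : ℝ) (hs : 0 ≤ s) :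
    Real.cosh (Real.sqrt s) = ∑' n : ℕ, s ^ n / (2*n).factorial := by
  rw [cosh_eq_tsum]
  congr 1; ext n
  rw [pow_mul, Real.sq_sqrt hs]

lemma summable_aux (s : ℝ) (hs : 0 ≤ s) :
    Summable (fun n : ℕ => s ^ n / (2*n).factorial) := by
  have := summable_cosh_series (Real.sqrt s)
  convert this using 2 with n
  rw [pow_mul, Real.sq_sqrt hs]

lemma cosh_sqrt_convex {a b t : ℝ} (ha : 0 ≤ a) (hb : 0 ≤ b) (ht0 : 0 ≤ t) (ht1 : t ≤ 1) :
    Real.cosh (Real.sqrt (t*a + (1-t)*b)) ≤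
      t * Real.cosh (Real.sqrt a) + (1-t) * Real.cosh (Real.sqrt b) := by
  have hab : 0 ≤ t*a + (1-t)*b := by
    have : 0 ≤ 1 - t := by linarith
    positivity
  rw [cosh_sqrt_eq _ hab, cosh_sqrt_eq _ ha, cosh_sqrt_eq _ hb,
    ← tsum_mul_left, ← tsum_mul_left,
    ← Summable.tsum_add ((summable_aux a ha).mul_left t) ((summable_aux b hb).mul_left (1-t))]
  apply Summable.tsum_le_tsum _ (summable_aux _ hab)
    (((summable_aux a ha).mul_left t).add ((summable_aux b hb).mul_left (1-t)))
  intro n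
  have hcv := (convexOn_pow (𝕜 := ℝ) n).2 (Set.mem_Ici.2 ha) (Set.mem_Ici.2 hb) ht0 (sub_nonneg.2 ht1)
    (by ring : t + (1 - t) = 1)
  simp only [smul_eq_mul] at hcv
  have hfac : (0:ℝ) < (2*n).factorial := Nat.cast_pos.2 (Nat.factorial_pos _)
  rw [show t * (a^n / (2*n).factorial) + (1-t) * (b^n / (2*n).factorial)
      = (t * a^n + (1-t) * b^n) / (2*n).factorial by ring]
  exact (div_le_div_iff_of_pos_right hfac).2 hcv

lemma key_scalar (A B c : ℝ) (hc : |c| ≤ 1) :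
    Real.cosh (Real.sqrt (A^2 + B^2 + 2*A*B*c)) ≤
      Real.sinh A * Real.sinh B * c + Real.cosh A * Real.cosh B := by
  obtain ⟨hc1, hc2⟩ := abs_le.1 hc
  have key := cosh_sqrt_convex (a := (A+B)^2) (b := (A-B)^2) (t := (1+c)/2)
    (sq_nonneg _) (sq_nonneg _) (by linarith) (by linarith)
  rw [show (1+c)/2*(A+B)^2 + (1-(1+c)/2)*(A-B)^2 = A^2+B^2+2*A*B*c by ring] at key
  rw [Real.sqrt_sq_eq_abs, Real.sqrt_sq_eq_abs, Real.cosh_abs, Real.cosh_abs] at key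
  refine key.trans_eq ?_
  rw [Real.cosh_add, Real.cosh_sub]; ring


lemma main_scalar (x2 y2 a b c r v : ℝ) (ha : 0 < a) (hb : 0 < b) (hc : |c| ≤ 1)
    (hr0 : 0 ≤ r) (hr2 : r^2 = a^2 + b^2 + 2*a*b*c) (hv : v = a*b*c) :
    Real.exp ((x2 + y2 + r)/Real.sqrt 2) + Real.exp ((x2 + y2 - r)/Real.sqrt 2) ≤
      (Real.exp ((x2+a)/Real.sqrt 2) - Real.exp ((x2-a)/Real.sqrt 2))/Real.sqrt 2 *
        ((Real.exp ((y2+b)/Real.sqrt 2) - Real.exp ((y2-b)/Real.sqrt 2))/Real.sqrt 2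
          * (a⁻¹ * (b⁻¹ * v))) +
      (Real.exp ((x2+a)/Real.sqrt 2) + Real.exp ((x2-a)/Real.sqrt 2))/Real.sqrt 2 *
        ((Real.exp ((y2+b)/Real.sqrt 2) + Real.exp ((y2-b)/Real.sqrt 2))/Real.sqrt 2) := by
  have hs2 : (0:ℝ) < Real.sqrt 2 := by positivity
  have h2 : Real.sqrt 2 * Real.sqrt 2 = 2 := Real.mul_self_sqrt (by norm_num)
  have hvc : a⁻¹ * (b⁻¹ * v) = c := by rw [hv]; field_simp
  rw [hvc]
  -- key inequality
  have hA := key_scalar (a / Real.sqrt 2) (b / Real.sqrt 2) c hc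
  have harg : (a/Real.sqrt 2)^2 + (b/Real.sqrt 2)^2 + 2*(a/Real.sqrt 2)*(b/Real.sqrt 2)*c
      = (r / Real.sqrt 2)^2 := by
    rw [div_pow, div_pow, div_pow, hr2, show (Real.sqrt 2:ℝ)^2 = 2 by rw [sq, h2],
      show 2*(a/Real.sqrt 2)*(b/Real.sqrt 2)*c = 2*((a*b)/(Real.sqrt 2*Real.sqrt 2))*c by ring, h2]
    ring
  rw [harg, Real.sqrt_sq (by positivity)] at hA
  rw [Real.cosh_eq, Real.cosh_eq, Real.cosh_eq, Real.sinh_eq, Real.sinh_eq,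
    Real.exp_neg, Real.exp_neg, Real.exp_neg] at hA
  -- rewrite goal exps into products
  rw [show (x2+y2+r)/Real.sqrt 2 = x2/Real.sqrt 2 + (y2/Real.sqrt 2 + r/Real.sqrt 2) by ring,
    show (x2+y2-r)/Real.sqrt 2 = x2/Real.sqrt 2 + (y2/Real.sqrt 2 - r/Real.sqrt 2) by ring,
    show (x2+a)/Real.sqrt 2 = x2/Real.sqrt 2 + a/Real.sqrt 2 by ring,
    show (x2-a)/Real.sqrt 2 = x2/Real.sqrt 2 - a/Real.sqrt 2 by ring,
    show (y2+b)/Real.sqrt 2 = y2/Real.sqrt 2 + b/Real.sqrt 2 by ring,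
    show (y2-b)/Real.sqrt 2 = y2/Real.sqrt 2 - b/Real.sqrt 2 by ring,
    Real.exp_add, Real.exp_add, Real.exp_add, Real.exp_sub, Real.exp_add, Real.exp_sub,
    Real.exp_add, Real.exp_sub]
  set ex := Real.exp (x2/Real.sqrt 2) with hex
  set ey := Real.exp (y2/Real.sqrt 2) with hey
  set ea := Real.exp (a/Real.sqrt 2) with hea
  set eb := Real.exp (b/Real.sqrt 2) with heb
  set er := Real.exp (r/Real.sqrt 2) with her
  have e1 : ∀ P Q C : ℝ, P/Real.sqrt 2 * (Q/Real.sqrt 2 * C) = P*(Q*C)/2 := fun P Q C => by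
    rw [show P/Real.sqrt 2 * (Q/Real.sqrt 2 * C)
      = P*(Q*C)/(Real.sqrt 2*Real.sqrt 2) by ring, h2]
  have e2 : ∀ P Q : ℝ, P/Real.sqrt 2 * (Q/Real.sqrt 2) = P*Q/2 := fun P Q => by
    rw [show P/Real.sqrt 2 * (Q/Real.sqrt 2) = P*Q/(Real.sqrt 2*Real.sqrt 2) by ring, h2]
  rw [e1, e2]
  have hex0 : 0 < ex := Real.exp_pos _
  have hey0 : 0 < ey := Real.exp_pos _
  have hmul := mul_le_mul_of_nonneg_left hA (by positivity : (0:ℝ) ≤ 2*ex*ey)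
  have hea0 : ea ≠ 0 := (Real.exp_pos _).ne'
  have heb0 : eb ≠ 0 := (Real.exp_pos _).ne'
  have her0 : er ≠ 0 := (Real.exp_pos _).ne'
  refine le_trans (le_of_eq ?_) (le_trans hmul (le_of_eq ?_))
  · ring
  · ring

lemma soc_GT {d : ℕ} (x y : EuclideanSpace ℝ (Fin d) × ℝ) :
    Real.exp ((x.2 + y.2 + ‖x.1 + y.1‖) / Real.sqrt 2)
      + Real.exp ((x.2 + y.2 - ‖x.1 + y.1‖) / Real.sqrt 2)
      ≤ inner ℝ (socExp x).1 (socExp y).1 + (socExp x).2 * (socExp y).2 := by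
  have hs2 : (0:ℝ) < Real.sqrt 2 := by positivity
  have h2 : Real.sqrt 2 * Real.sqrt 2 = 2 := Real.mul_self_sqrt (by norm_num)
  by_cases hx : x.1 = 0
  · by_cases hy : y.1 = 0
    · unfold socExp
      rw [if_pos hx, if_pos hy]
      simp only [hx, hy, inner_zero_left, add_zero, norm_zero, sub_zero, zero_add]
      rw [show Real.sqrt 2 * Real.exp (x.2/Real.sqrt 2) * (Real.sqrt 2 * Real.exp (y.2/Real.sqrt 2))
          = (Real.sqrt 2 * Real.sqrt 2) * (Real.exp (x.2/Real.sqrt 2) * Real.exp (y.2/Real.sqrt 2))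
          by ring, h2, ← Real.exp_add, ← add_div]
      linarith [Real.exp_pos ((x.2 + y.2)/Real.sqrt 2)]
    · unfold socExp
      rw [if_pos hx, if_neg hy]
      simp only [hx, inner_zero_left, zero_add]
      have h1 : Real.exp ((x.2+y.2+‖y.1‖)/Real.sqrt 2)
          = Real.exp (x.2/Real.sqrt 2) * Real.exp ((y.2+‖y.1‖)/Real.sqrt 2) := by
        rw [← Real.exp_add]; congr 1; ring
      have h1' : Real.exp ((x.2+y.2-‖y.1‖)/Real.sqrt 2)
          = Real.exp (x.2/Real.sqrt 2) * Real.exp ((y.2-‖y.1‖)/Real.sqrt 2) := by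
        rw [← Real.exp_add]; congr 1; ring
      rw [h1, h1', show Real.sqrt 2 * Real.exp (x.2/Real.sqrt 2) *
          ((Real.exp ((y.2+‖y.1‖)/Real.sqrt 2) + Real.exp ((y.2-‖y.1‖)/Real.sqrt 2))/Real.sqrt 2)
          = (Real.exp ((y.2+‖y.1‖)/Real.sqrt 2) + Real.exp ((y.2-‖y.1‖)/Real.sqrt 2))/Real.sqrt 2
            * Real.sqrt 2 * Real.exp (x.2/Real.sqrt 2) by ring,
        div_mul_cancel₀ _ (ne_of_gt hs2)]
      apply le_of_eq; ring
  · by_cases hy : y.1 = 0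
    · unfold socExp
      rw [if_neg hx, if_pos hy]
      simp only [hy, inner_zero_right, add_zero]
      have h1 : Real.exp ((x.2+y.2+‖x.1‖)/Real.sqrt 2)
          = Real.exp ((x.2+‖x.1‖)/Real.sqrt 2) * Real.exp (y.2/Real.sqrt 2) := by
        rw [← Real.exp_add]; congr 1; ring
      have h1' : Real.exp ((x.2+y.2-‖x.1‖)/Real.sqrt 2)
          = Real.exp ((x.2-‖x.1‖)/Real.sqrt 2) * Real.exp (y.2/Real.sqrt 2) := by
        rw [← Real.exp_add]; congr 1; ring
      rw [h1, h1', show (Real.exp ((x.2+‖x.1‖)/Real.sqrt 2) + Real.exp ((x.2-‖x.1‖)/Real.sqrt 2))/Real.sqrt 2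
          * (Real.sqrt 2 * Real.exp (y.2/Real.sqrt 2))
          = (Real.exp ((x.2+‖x.1‖)/Real.sqrt 2) + Real.exp ((x.2-‖x.1‖)/Real.sqrt 2))/Real.sqrt 2
            * Real.sqrt 2 * Real.exp (y.2/Real.sqrt 2) by ring,
        div_mul_cancel₀ _ (ne_of_gt hs2)]
      apply le_of_eq; ring
    · have ha : 0 < ‖x.1‖ := norm_pos_iff.2 hx
      have hb : 0 < ‖y.1‖ := norm_pos_iff.2 hy
      have hcs : |(inner ℝ x.1 y.1 : ℝ)| ≤ ‖x.1‖ * ‖y.1‖ := abs_real_inner_le_norm x.1 y.1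
      set c : ℝ := (inner ℝ x.1 y.1 : ℝ) / (‖x.1‖ * ‖y.1‖) with hc_def
      have hc : |c| ≤ 1 := by
        rw [hc_def, abs_div, abs_of_pos (mul_pos ha hb), div_le_one (mul_pos ha hb)]
        exact hcs
      have hinner : (inner ℝ x.1 y.1 : ℝ) = ‖x.1‖ * ‖y.1‖ * c := by
        rw [hc_def]; field_simp
      have hr2 : ‖x.1 + y.1‖^2 = ‖x.1‖^2 + ‖y.1‖^2 + 2*‖x.1‖*‖y.1‖*c := by
        rw [norm_add_sq_real, hinner]; ring
      unfold socExp
      rw [if_neg hx, if_neg hy]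
      simp only
      rw [real_inner_smul_left, real_inner_smul_right, real_inner_smul_left, real_inner_smul_right]
      exact main_scalar x.2 y.2 ‖x.1‖ ‖y.1‖ c ‖x.1 + y.1‖ (inner ℝ x.1 y.1) ha hb hc
        (norm_nonneg _) hr2 hinner

lemma sqrt_two_pos : (0:ℝ) < Real.sqrt 2 := by positivity
lemma sqrt_two_sq : Real.sqrt 2 * Real.sqrt 2 = 2 := Real.mul_self_sqrt (by norm_num)

lemma socTrace_socExp {d : ℕ} (z : EuclideanSpace ℝ (Fin d) × ℝ) :
    socTrace (socExp z) = Real.exp ((z.2 + ‖z.1‖) / Real.sqrt 2)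
      + Real.exp ((z.2 - ‖z.1‖) / Real.sqrt 2) := by
  unfold socTrace socExp
  split_ifs with h
  · rw [h, norm_zero, add_zero, sub_zero, ← mul_assoc, sqrt_two_sq]
    ring
  · rw [mul_div_cancel₀ _ (ne_of_gt sqrt_two_pos)]

lemma socExp_snd_pos {d : ℕ} (z : EuclideanSpace ℝ (Fin d) × ℝ) : 0 < (socExp z).2 := by
  unfold socExp
  split_ifs with h
  · simp only
    positivity
  · simp only
    positivity

lemma socExp_cone {d : ℕ} (z : EuclideanSpace ℝ (Fin d) × ℝ) :
    ‖(socExp z).1‖ ≤ (socExp z).2 := by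
  unfold socExp
  split_ifs with h
  · simp only [norm_zero]
    positivity
  · simp only [norm_smul, Real.norm_eq_abs, norm_inv, norm_norm]
    have h1 : 0 < ‖z.1‖ := norm_pos_iff.2 h
    rw [abs_of_pos h1, inv_mul_cancel₀ (ne_of_gt h1), mul_one, abs_div,
      abs_of_pos sqrt_two_pos]
    apply (div_le_div_iff_of_pos_right sqrt_two_pos).2
    rw [abs_le]
    constructor <;> nlinarith [Real.exp_pos ((z.2 + ‖z.1‖)/Real.sqrt 2),
      Real.exp_pos ((z.2 - ‖z.1‖)/Real.sqrt 2)]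

lemma cone_inner_nonneg {d : ℕ} (u v : EuclideanSpace ℝ (Fin d)) (u2 v2 : ℝ)
    (hu : ‖u‖ ≤ u2) (hv : ‖v‖ ≤ v2) : 0 ≤ (inner ℝ u v : ℝ) + u2 * v2 := by
  have h1 := (abs_le.1 (abs_real_inner_le_norm u v)).1
  have h2 : ‖u‖ * ‖v‖ ≤ u2 * v2 :=
    mul_le_mul hu hv (norm_nonneg _) ((norm_nonneg u).trans hu)
  linarith

lemma exp_quad {w : ℝ} (hw : |w| ≤ 1) : Real.exp w ≤ 1 + w + w^2 := by
  have h := Real.exp_bound hw (by norm_num : 0 < 2)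
  rw [show (Finset.range 2) = {0, 1} by rfl] at h
  simp [Finset.sum_insert, Finset.sum_singleton] at h
  rw [abs_le] at h
  nlinarith [sq_abs w, h.2]

lemma step_scalar (η μ : ℝ) (hη0 : 0 < η) (hη1 : η ≤ 1) (hμ : |μ| ≤ Real.sqrt 2) :
    Real.sqrt 2 * Real.exp ((-η * μ) / Real.sqrt 2) ≤ (1 + η^2) * Real.sqrt 2 - η * μ := by
  set w := (-η * μ) / Real.sqrt 2 with hw_def
  have habs : |w| ≤ η := by
    rw [hw_def, abs_div, abs_of_pos sqrt_two_pos, abs_mul, abs_neg, abs_of_pos hη0,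
      div_le_iff₀ sqrt_two_pos]
    calc η * |μ| ≤ η * Real.sqrt 2 := by nlinarith
      _ = η * Real.sqrt 2 := rfl
  have hw1 : |w| ≤ 1 := habs.trans hη1
  have hw2 : w^2 ≤ η^2 := by nlinarith [abs_nonneg w, sq_abs w]
  have he := exp_quad hw1
  have hsw : Real.sqrt 2 * w = -η * μ := by
    rw [hw_def, mul_div_assoc']
    rw [mul_comm, mul_div_assoc, div_self (ne_of_gt sqrt_two_pos), mul_one]
  calc Real.sqrt 2 * Real.exp w ≤ Real.sqrt 2 * (1 + w + η^2) := by
        nlinarith [sqrt_two_pos]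
    _ = (1 + η^2) * Real.sqrt 2 + Real.sqrt 2 * w := by ring
    _ = (1 + η^2) * Real.sqrt 2 - η * μ := by rw [hsw]; ring

lemma two_div_identity (P Q : ℝ) :
    (P - Q)/Real.sqrt 2 + (P + Q)/Real.sqrt 2 = Real.sqrt 2 * P := by
  rw [← add_div, show P - Q + (P + Q) = Real.sqrt 2 * Real.sqrt 2 * P by
    rw [sqrt_two_sq]; ring, mul_assoc, mul_div_cancel_left₀ _ (ne_of_gt sqrt_two_pos)]

lemma two_div_identity' (P Q : ℝ) :
    (P + Q)/Real.sqrt 2 - (P - Q)/Real.sqrt 2 = Real.sqrt 2 * Q := by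
  rw [← sub_div, show P + Q - (P - Q) = Real.sqrt 2 * Real.sqrt 2 * Q by
    rw [sqrt_two_sq]; ring, mul_assoc, mul_div_cancel_left₀ _ (ne_of_gt sqrt_two_pos)]

set_option maxHeartbeats 1000000 in
lemma soc_step {d : ℕ} (z m : EuclideanSpace ℝ (Fin d) × ℝ) (η : ℝ)
    (hη0 : 0 < η) (hη1 : η ≤ 1) (hm : (|m.2| + ‖m.1‖) / Real.sqrt 2 ≤ 1) :
    socTrace (socExp (z + (-η) • m)) ≤
      (1 + η^2) * socTrace (socExp z)
        - η * ((inner ℝ m.1 (socExp z).1 : ℝ) + m.2 * (socExp z).2) := by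
  have hmb : |m.2| + ‖m.1‖ ≤ Real.sqrt 2 := by
    rw [div_le_one sqrt_two_pos] at hm; exact hm
  set y : EuclideanSpace ℝ (Fin d) × ℝ := (-η) • m with hy_def
  have hy1 : y.1 = (-η) • m.1 := rfl
  have hy2 : y.2 = -η * m.2 := rfl
  -- the cone element dominating socExp y
  have hD : ‖(-η) • m.1 - (socExp y).1‖ ≤
      ((1 + η^2) * Real.sqrt 2 - η * m.2) - (socExp y).2 := by
    by_cases hm1 : m.1 = 0
    · have hy10 : y.1 = 0 := by rw [hy1, hm1, smul_zero]
      have hF : socExp y = (0, Real.sqrt 2 * Real.exp (y.2 / Real.sqrt 2)) := by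
        unfold socExp; rw [if_pos hy10]
      rw [hF, hm1, smul_zero]
      simp only [sub_zero, norm_zero]
      have := step_scalar η m.2 hη0 hη1 (by nlinarith [norm_nonneg m.1, abs_nonneg m.2])
      rw [hy2]
      linarith
    · have ha : 0 < ‖m.1‖ := norm_pos_iff.2 hm1
      have hy10 : y.1 ≠ 0 := by
        rw [hy1]; exact smul_ne_zero (neg_ne_zero.2 (ne_of_gt hη0)) hm1
      have hn : ‖y.1‖ = η * ‖m.1‖ := by
        rw [hy1, norm_smul, Real.norm_eq_abs, abs_neg, abs_of_pos hη0]
      have harg1 : (y.2 + ‖y.1‖)/Real.sqrt 2 = (-η * (m.2 - ‖m.1‖))/Real.sqrt 2 := by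
        rw [hy2, hn]; congr 1; ring
      have harg2 : (y.2 - ‖y.1‖)/Real.sqrt 2 = (-η * (m.2 + ‖m.1‖))/Real.sqrt 2 := by
        rw [hy2, hn]; congr 1; ring
      have hunit : ‖y.1‖⁻¹ • y.1 = (-(‖m.1‖⁻¹)) • m.1 := by
        rw [hn, hy1, smul_smul]
        congr 1
        field_simp
      have hF1 : (socExp y).1 =
          (((Real.exp ((-η * (m.2 - ‖m.1‖))/Real.sqrt 2)
            - Real.exp ((-η * (m.2 + ‖m.1‖))/Real.sqrt 2))/Real.sqrt 2)
            * (-(‖m.1‖⁻¹))) • m.1 := by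
        unfold socExp; rw [if_neg hy10]; simp only
        rw [harg1, harg2, hunit, smul_smul]
      have hF2 : (socExp y).2 =
          (Real.exp ((-η * (m.2 - ‖m.1‖))/Real.sqrt 2)
            + Real.exp ((-η * (m.2 + ‖m.1‖))/Real.sqrt 2))/Real.sqrt 2 := by
        unfold socExp; rw [if_neg hy10]; simp only
        rw [harg1, harg2]
      set Ep := Real.exp ((-η * (m.2 - ‖m.1‖))/Real.sqrt 2) with hEp
      set Em := Real.exp ((-η * (m.2 + ‖m.1‖))/Real.sqrt 2) with hEm
      have s1 := step_scalar η (m.2 - ‖m.1‖) hη0 hη1 (by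
        have h1 := le_abs_self m.2
        have h2 := neg_abs_le m.2
        rw [abs_le]; constructor <;> nlinarith [ha.le])
      have s2 := step_scalar η (m.2 + ‖m.1‖) hη0 hη1 (by
        have h1 := le_abs_self m.2
        have h2 := neg_abs_le m.2
        rw [abs_le]; constructor <;> nlinarith [ha.le])
      rw [hF1, hF2, ← sub_smul, norm_smul, Real.norm_eq_abs]
      rw [show |(-η - (Ep - Em)/Real.sqrt 2 * (-(‖m.1‖⁻¹)))| * ‖m.1‖
          = |(-η - (Ep - Em)/Real.sqrt 2 * (-(‖m.1‖⁻¹))) * ‖m.1‖|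
          by rw [abs_mul, abs_of_pos ha]]
      have hρa : (-η - (Ep - Em)/Real.sqrt 2 * (-(‖m.1‖⁻¹))) * ‖m.1‖
          = -η * ‖m.1‖ + (Ep - Em)/Real.sqrt 2 := by
        field_simp
        ring
      rw [hρa, abs_le]
      have hk1 := two_div_identity Ep Em
      have hk2 := two_div_identity' Ep Em
      constructor
      · -- lower bound
        nlinarith [s2, hk2]
      · nlinarith [s1, hk1]
  -- combine GT with cone bound
  have hGT := soc_GT z y
  have hcone := cone_inner_nonneg (socExp z).1 ((-η) • m.1 - (socExp y).1)
    (socExp z).2 (((1 + η^2) * Real.sqrt 2 - η * m.2) - (socExp y).2)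
    (socExp_cone z) hD
  rw [inner_sub_right] at hcone
  have hTr : socTrace (socExp (z + y)) =
      Real.exp ((z.2 + y.2 + ‖z.1 + y.1‖)/Real.sqrt 2)
        + Real.exp ((z.2 + y.2 - ‖z.1 + y.1‖)/Real.sqrt 2) := by
    rw [socTrace_socExp, Prod.fst_add, Prod.snd_add]
  have hsm : (inner ℝ (socExp z).1 ((-η) • m.1) : ℝ) = -η * inner ℝ m.1 (socExp z).1 := by
    rw [real_inner_smul_right, real_inner_comm]
  have hTrz : socTrace (socExp z) = Real.sqrt 2 * (socExp z).2 := rfl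
  calc socTrace (socExp (z + y)) ≤ inner ℝ (socExp z).1 (socExp y).1
      + (socExp z).2 * (socExp y).2 := by rw [hTr]; exact hGT
    _ ≤ (inner ℝ (socExp z).1 ((-η) • m.1) : ℝ)
        + (socExp z).2 * ((1 + η^2) * Real.sqrt 2 - η * m.2) := by nlinarith [hcone]
    _ = (1 + η^2) * (Real.sqrt 2 * (socExp z).2)
        - η * ((inner ℝ m.1 (socExp z).1 : ℝ) + m.2 * (socExp z).2) := by
      rw [hsm]; ring
    _ = _ := by rw [hTrz]

/-- SCMWU regret bound on the second-order cone. -/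
theorem scmwu_regret_soc
    (d T : ℕ) (hd : 1 ≤ d) (hT : 1 ≤ T) (η : ℝ) (hη0 : 0 < η) (hη1 : η ≤ 1)
    (m : ℕ → EuclideanSpace ℝ (Fin d) × ℝ)
    (hm : ∀ t ∈ Finset.range T, (|(m t).2| + ‖(m t).1‖) / Real.sqrt 2 ≤ 1)
    (x p : ℕ → EuclideanSpace ℝ (Fin d) × ℝ)
    (hx : ∀ t, x t = (-η) • ∑ τ ∈ Finset.range t, m τ)
    (hp : ∀ t, p t = (socTrace (socExp (x t)))⁻¹ • socExp (x t)) :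
    ∑ t ∈ Finset.range T, ((inner ℝ (m t).1 (p t).1 : ℝ) + (m t).2 * (p t).2) ≤
      (((∑ t ∈ Finset.range T, m t).2 - ‖(∑ t ∈ Finset.range T, m t).1‖) / Real.sqrt 2)
        + η * T + Real.log 2 / η := by
  set Φ : ℕ → ℝ := fun n => socTrace (socExp (x n)) with hΦ_def
  set L : ℕ → ℝ := fun t => (inner ℝ (m t).1 (p t).1 : ℝ) + (m t).2 * (p t).2 with hL_def
  have hΦpos : ∀ n, 0 < Φ n := fun n => by
    rw [hΦ_def]; simp only; rw [socTrace_socExp]; positivity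
  have hΦ0 : Φ 0 = 2 := by
    have hx0 : x 0 = 0 := by rw [hx 0]; simp
    rw [hΦ_def]; simp only
    rw [socTrace_socExp, hx0]
    norm_num
  -- relation between L and socExp
  have hLrel : ∀ t, (inner ℝ (m t).1 (socExp (x t)).1 : ℝ) + (m t).2 * (socExp (x t)).2
      = Φ t * L t := by
    intro t
    have h1 : (p t).1 = (Φ t)⁻¹ • (socExp (x t)).1 := by rw [hp t]; rfl
    have h2 : (p t).2 = (Φ t)⁻¹ * (socExp (x t)).2 := by rw [hp t]; rfl
    rw [hL_def]; simp only
    rw [h1, h2, real_inner_smul_right]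
    field_simp [(hΦpos t).ne']
  -- per-step bound
  have hstep : ∀ t, t < T → Φ (t+1) ≤ Φ t * Real.exp (η^2 - η * L t) := by
    intro t ht
    have hxs : x (t+1) = x t + (-η) • m t := by
      rw [hx (t+1), hx t, Finset.sum_range_succ, smul_add]
    have h1 : Φ (t+1) ≤ (1 + η^2) * Φ t - η * (Φ t * L t) := by
      rw [hΦ_def]; simp only
      rw [hxs, ← hLrel t]
      exact soc_step (x t) (m t) η hη0 hη1 (hm t (Finset.mem_range.2 ht))
    have h2 : (1 + η^2) * Φ t - η * (Φ t * L t) = Φ t * (1 + (η^2 - η * L t)) := by ring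
    have h3 : 1 + (η^2 - η * L t) ≤ Real.exp (η^2 - η * L t) := by
      linarith [Real.add_one_le_exp (η^2 - η * L t)]
    calc Φ (t+1) ≤ Φ t * (1 + (η^2 - η * L t)) := by linarith
      _ ≤ Φ t * Real.exp (η^2 - η * L t) :=
        mul_le_mul_of_nonneg_left h3 (hΦpos t).le
  -- induction
  have hmain : ∀ n, n ≤ T → Φ n ≤ 2 * Real.exp (∑ t ∈ Finset.range n, (η^2 - η * L t)) := by
    intro n
    induction n with
    | zero => intro _; simp [hΦ0]
    | succ n ih =>
      intro hn
      have hn' : n < T := Nat.lt_of_succ_le hn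
      calc Φ (n+1) ≤ Φ n * Real.exp (η^2 - η * L n) := hstep n hn'
        _ ≤ 2 * Real.exp (∑ t ∈ Finset.range n, (η^2 - η * L t))
            * Real.exp (η^2 - η * L n) :=
          mul_le_mul_of_nonneg_right (ih hn'.le) (Real.exp_pos _).le
        _ = 2 * Real.exp (∑ t ∈ Finset.range (n+1), (η^2 - η * L t)) := by
          rw [Finset.sum_range_succ, Real.exp_add]; ring
  -- lower bound on Φ T
  set S : EuclideanSpace ℝ (Fin d) × ℝ := ∑ t ∈ Finset.range T, m t with hS_def
  have hxT : x T = (-η) • S := hx T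
  have hlow : Real.exp ((-η * S.2 + η * ‖S.1‖) / Real.sqrt 2) ≤ Φ T := by
    have h1 : Φ T = Real.exp (((x T).2 + ‖(x T).1‖) / Real.sqrt 2)
        + Real.exp (((x T).2 - ‖(x T).1‖) / Real.sqrt 2) := by
      rw [hΦ_def]; simp only; rw [socTrace_socExp]
    have h2 : (x T).2 = -η * S.2 := by rw [hxT]; rfl
    have h3 : ‖(x T).1‖ = η * ‖S.1‖ := by
      rw [hxT, Prod.smul_fst, norm_smul, Real.norm_eq_abs, abs_neg, abs_of_pos hη0]
    rw [h1, h2, h3]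
    linarith [Real.exp_pos ((-η * S.2 - η * ‖S.1‖) / Real.sqrt 2)]
  -- combine
  have hcomb := hlow.trans (hmain T le_rfl)
  have hsum : ∑ t ∈ Finset.range T, (η^2 - η * L t)
      = T * η^2 - η * ∑ t ∈ Finset.range T, L t := by
    rw [Finset.sum_sub_distrib, Finset.sum_const, Finset.card_range, ← Finset.mul_sum]
    push_cast
    ring
  rw [hsum] at hcomb
  have hlog : Real.exp ((-η * S.2 + η * ‖S.1‖) / Real.sqrt 2)
      ≤ Real.exp (Real.log 2 + (T * η^2 - η * ∑ t ∈ Finset.range T, L t)) := by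
    rw [Real.exp_add, Real.exp_log (by norm_num : (0:ℝ) < 2)]
    exact hcomb
  have hineq := Real.exp_le_exp.1 hlog
  -- final arithmetic
  have hgoal : ∑ t ∈ Finset.range T, L t ≤ (S.2 - ‖S.1‖) / Real.sqrt 2
      + η * T + Real.log 2 / η := by
    rw [← mul_le_mul_iff_of_pos_left hη0]
    have hlog2 : η * ((S.2 - ‖S.1‖) / Real.sqrt 2 + η * T + Real.log 2 / η)
        = η * ((S.2 - ‖S.1‖) / Real.sqrt 2) + η^2 * T + Real.log 2 := by
      field_simp
    rw [hlog2]
    have hid : (-η * S.2 + η * ‖S.1‖) / Real.sqrt 2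
        = -(η * ((S.2 - ‖S.1‖) / Real.sqrt 2)) := by ring
    rw [hid] at hineq
    linarith
  exact hgoal
end

section
/- Let n_1, n_2 ≥ 1 and D > 0, let u_1, …, u_{n_1} ∈ ℝ^d and v_1, …, v_{n_2} ∈ ℝ^d all have Euclidean norm at most D, let μ ∈ ℝ^{n_1} and γ ∈ ℝ^{n_2} have nonnegative entries with T_μ := Σ_i μ_i > 0 and T_γ := Σ_j γ_j > 0, and let α ∈ ℝ. Define s_1 = D and s_2 = α − D if T_μ ≤ T_γ, and s_1 = α − D and s_2 = D otherwise. If for every w ∈ ℝ^d with ‖w‖ ≤ 1 one has ⟨Σ_i μ_i u_i − Σ_j γ_j v_j, w⟩ − T_μ·s_1 − T_γ·s_2 < 0, then ‖(1/T_μ)·Σ_i μ_i u_i − (1/T_γ)·Σ_j γ_j v_j‖ < α. -/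
set_option maxHeartbeats 1000000


/-- The Claim in the proof of the SVM theorem: if the ORACLE subproblem has a
negative optimal value, the normalized weights give a polytope-distance
solution with value less than `α`. -/
theorem svm_oracle_fail_gives_pd_solution
    (d n₁ n₂ : ℕ) (hn₁ : 1 ≤ n₁) (hn₂ : 1 ≤ n₂) (D : ℝ) (hD : 0 < D)
    (u : Fin n₁ → EuclideanSpace ℝ (Fin d)) (v : Fin n₂ → EuclideanSpace ℝ (Fin d))
    (hu : ∀ i, ‖u i‖ ≤ D) (hv : ∀ j, ‖v j‖ ≤ D)
    (μ : Fin n₁ → ℝ) (γ : Fin n₂ → ℝ)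
    (hμ : ∀ i, 0 ≤ μ i) (hγ : ∀ j, 0 ≤ γ j)
    (hTμ : 0 < ∑ i, μ i) (hTγ : 0 < ∑ j, γ j)
    (α : ℝ) (s₁ s₂ : ℝ)
    (hs₁ : s₁ = if (∑ i, μ i) ≤ (∑ j, γ j) then D else α - D)
    (hs₂ : s₂ = if (∑ i, μ i) ≤ (∑ j, γ j) then α - D else D)
    (horacle : ∀ w : EuclideanSpace ℝ (Fin d), ‖w‖ ≤ 1 →
      (inner ℝ ((∑ i, μ i • u i) - ∑ j, γ j • v j) w : ℝ)
        - (∑ i, μ i) * s₁ - (∑ j, γ j) * s₂ < 0) :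
    ‖(∑ i, μ i)⁻¹ • (∑ i, μ i • u i) - (∑ j, γ j)⁻¹ • (∑ j, γ j • v j)‖ < α := by
  set Tμ := ∑ i, μ i with hTμdef
  set Tγ := ∑ j, γ j with hTγdef
  set p := ∑ i, μ i • u i with hp
  set q := ∑ j, γ j • v j with hq
  set a := Tμ⁻¹ • p with ha
  set b := Tγ⁻¹ • q with hb
  have hpnorm : ‖p‖ ≤ Tμ * D := by
    calc ‖p‖ ≤ ∑ i, ‖μ i • u i‖ := norm_sum_le _ _
    _ ≤ ∑ i, μ i * D := by
        refine Finset.sum_le_sum fun i _ => ?_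
        rw [norm_smul, Real.norm_eq_abs, abs_of_nonneg (hμ i)]
        exact mul_le_mul_of_nonneg_left (hu i) (hμ i)
    _ = Tμ * D := by rw [← Finset.sum_mul]
  have hqnorm : ‖q‖ ≤ Tγ * D := by
    calc ‖q‖ ≤ ∑ j, ‖γ j • v j‖ := norm_sum_le _ _
    _ ≤ ∑ j, γ j * D := by
        refine Finset.sum_le_sum fun j _ => ?_
        rw [norm_smul, Real.norm_eq_abs, abs_of_nonneg (hγ j)]
        exact mul_le_mul_of_nonneg_left (hv j) (hγ j)
    _ = Tγ * D := by rw [← Finset.sum_mul]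
  have hanorm : ‖a‖ ≤ D := by
    rw [ha, norm_smul, Real.norm_eq_abs, abs_of_nonneg (le_of_lt (inv_pos.mpr hTμ))]
    calc Tμ⁻¹ * ‖p‖ ≤ Tμ⁻¹ * (Tμ * D) :=
        mul_le_mul_of_nonneg_left hpnorm (le_of_lt (inv_pos.mpr hTμ))
    _ = D := by field_simp
  have hbnorm : ‖b‖ ≤ D := by
    rw [hb, norm_smul, Real.norm_eq_abs, abs_of_nonneg (le_of_lt (inv_pos.mpr hTγ))]
    calc Tγ⁻¹ * ‖q‖ ≤ Tγ⁻¹ * (Tγ * D) :=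
        mul_le_mul_of_nonneg_left hqnorm (le_of_lt (inv_pos.mpr hTγ))
    _ = D := by field_simp
  have hpa : Tμ • a = p := by rw [ha, smul_smul, mul_inv_cancel₀ (ne_of_gt hTμ), one_smul]
  have hqb : Tγ • b = q := by rw [hb, smul_smul, mul_inv_cancel₀ (ne_of_gt hTγ), one_smul]
  set x := a - b with hx
  show ‖x‖ < α
  by_cases hx0 : x = 0
  · -- then need 0 < α
    have h0 := horacle 0 (by simp)
    rw [hx0, norm_zero]
    simp only [inner_zero_right] at h0
    rw [hs₁, hs₂] at h0
    by_cases hle : Tμ ≤ Tγ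
    · simp only [if_pos hle] at h0
      nlinarith
    · simp only [if_neg hle] at h0
      push_neg at hle
      nlinarith
  · set w := ‖x‖⁻¹ • x with hw
    have hxpos : 0 < ‖x‖ := norm_pos_iff.mpr hx0
    have hwnorm : ‖w‖ = 1 := by
      rw [hw, norm_smul, Real.norm_eq_abs, abs_of_nonneg (le_of_lt (inv_pos.mpr hxpos))]
      field_simp
    have hxw : (inner ℝ x w : ℝ) = ‖x‖ := by
      rw [hw, real_inner_smul_right, real_inner_self_eq_norm_sq]
      field_simp [pow_two]
    have haw : (inner ℝ a w : ℝ) ≤ D := by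
      calc (inner ℝ a w : ℝ) ≤ ‖a‖ * ‖w‖ := real_inner_le_norm a w
      _ ≤ D := by rw [hwnorm, mul_one]; exact hanorm
    have hbw : -D ≤ (inner ℝ b w : ℝ) := by
      have := abs_real_inner_le_norm b w
      rw [hwnorm, mul_one] at this
      have := abs_le.mp (le_trans this hbnorm)
      linarith [this.1]
    have hor := horacle w (le_of_eq hwnorm)
    rw [hs₁, hs₂] at hor
    by_cases hle : Tμ ≤ Tγ
    · simp only [if_pos hle] at hor
      have hdecomp : p - q = Tγ • x + (Tμ - Tγ) • a := by
        rw [hx, ← hpa, ← hqb]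
        module
      have hinner : (inner ℝ (p - q) w : ℝ) = Tγ * ‖x‖ + (Tμ - Tγ) * (inner ℝ a w : ℝ) := by
        rw [hdecomp, inner_add_left, real_inner_smul_left, real_inner_smul_left, hxw]
      rw [hinner] at hor
      have h1 : (Tμ - Tγ) * D ≤ (Tμ - Tγ) * (inner ℝ a w : ℝ) :=
        mul_le_mul_of_nonpos_left haw (by linarith)
      have h2 : Tγ * ‖x‖ < Tγ * α := by nlinarith
      exact lt_of_mul_lt_mul_left h2 (le_of_lt hTγ)
    · simp only [if_neg hle] at hor
      push_neg at hle
      have hdecomp : p - q = Tμ • x + (Tμ - Tγ) • b := by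
        rw [hx, ← hpa, ← hqb]
        module
      have hinner : (inner ℝ (p - q) w : ℝ) = Tμ * ‖x‖ + (Tμ - Tγ) * (inner ℝ b w : ℝ) := by
        rw [hdecomp, inner_add_left, real_inner_smul_left, real_inner_smul_left, hxw]
      rw [hinner] at hor
      have h1 : (Tμ - Tγ) * (-D) ≤ (Tμ - Tγ) * (inner ℝ b w : ℝ) :=
        mul_le_mul_of_nonneg_left hbw (by linarith)
      have h2 : Tμ * ‖x‖ < Tμ * α := by nlinarith
      exact lt_of_mul_lt_mul_left h2 (le_of_lt hTμ)
end
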